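/- arXiv:2406.02987 — 3 statements merged into one kernel-verified Lean document; each statement's English description precedes it below -/
import Mathlib

section
/- A single QFormer block (self-attention on the queries followed by residual cross-attention with the instances) is permutation invariant in the instances: for every q ∈ ℝ^{R×D}, B ∈ ℝ^{M×D}, and permutation π of {1,…,M}, setting q₁ = q + Attention(q, q, q) and G(q, B) = q₁ + Attention(q₁, B, B), one has G(q, π·B) = G(q, B). -/
open Matrix BigOperators

/-- Row-wise softmax of a real matrix. -/
noncomputable def rowSoftmax {m n : ℕ} (M : Matrix (Fin m) (Fin n) ℝ) :
    Matrix (Fin m) (Fin n) ℝ :=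
  Matrix.of fun i j => Real.exp (M i j) / ∑ k, Real.exp (M i k)

/-- Attention operator: rowSoftmax (Q Kᵀ / √D) · V. -/
noncomputable def attention {R₁ R₂ D : ℕ} (Q : Matrix (Fin R₁) (Fin D) ℝ)
    (K V : Matrix (Fin R₂) (Fin D) ℝ) : Matrix (Fin R₁) (Fin D) ℝ :=
  rowSoftmax ((Real.sqrt D)⁻¹ • (Q * Kᵀ)) * V

/-- Row permutation of a matrix: (π·M)_{ij} = M_{π(i), j}. -/
def permRows {m n : ℕ} (π : Equiv.Perm (Fin m)) (M : Matrix (Fin m) (Fin n) ℝ) :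
    Matrix (Fin m) (Fin n) ℝ :=
  Matrix.of fun i j => M (π i) j


lemma attention_perm {R₁ M D : ℕ} (Q : Matrix (Fin R₁) (Fin D) ℝ)
    (B : Matrix (Fin M) (Fin D) ℝ) (π : Equiv.Perm (Fin M)) :
    attention Q (permRows π B) (permRows π B) = attention Q B B := by
  ext i j
  simp only [attention, Matrix.mul_apply, rowSoftmax, Matrix.of_apply,
    Matrix.smul_apply, smul_eq_mul, Matrix.transpose_apply, permRows]
  have hden :
      (∑ x : Fin M, Real.exp ((Real.sqrt D)⁻¹ * ∑ d : Fin D, Q i d * B (π x) d)) =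
        ∑ x : Fin M, Real.exp ((Real.sqrt D)⁻¹ * ∑ d : Fin D, Q i d * B x d) :=
    Fintype.sum_equiv π _ _ fun x => rfl
  rw [hden]
  exact Fintype.sum_equiv π _ _ fun x => rfl

theorem qformerBlock_perm_invariant {R M D : ℕ} (hD : 0 < D)
    (q : Matrix (Fin R) (Fin D) ℝ) (B : Matrix (Fin M) (Fin D) ℝ)
    (π : Equiv.Perm (Fin M)) :
    (fun (B' : Matrix (Fin M) (Fin D) ℝ) =>
        let q₁ := q + attention q q q
        q₁ + attention q₁ B' B') (permRows π B) =
      (fun (B' : Matrix (Fin M) (Fin D) ℝ) =>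
        let q₁ := q + attention q q q
        q₁ + attention q₁ B' B') B := by
  simp only []
  rw [attention_perm]
end

section
/- A single CSA-enhanced MIVPG block is permutation invariant in the instances: for every bag B ∈ ℝ^{M×D}, query matrix q ∈ ℝ^{R×D}, and permutation π of {1,…,M}, setting B'(B) = Attention(B, q, q) (the CSA update of the instances) and q'(B) = q + Attention(q, B'(B), B'(B)), one has B'(π·B) = π·B'(B) and q'(π·B) = q'(B). -/
open Matrix BigOperators

/-- CSA update of the instances: B' = Attention(B, q, q). -/
noncomputable def csaUpdate {M R D : ℕ} (q : Matrix (Fin R) (Fin D) ℝ)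
    (B : Matrix (Fin M) (Fin D) ℝ) : Matrix (Fin M) (Fin D) ℝ :=
  attention B q q

/-- Query update by residual cross-attention with the CSA-updated instances. -/
noncomputable def queryUpdate {M R D : ℕ} (q : Matrix (Fin R) (Fin D) ℝ)
    (B : Matrix (Fin M) (Fin D) ℝ) : Matrix (Fin R) (Fin D) ℝ :=
  q + attention q (csaUpdate q B) (csaUpdate q B)


lemma attention_permRows_left {R₁ R₂ D : ℕ} (π : Equiv.Perm (Fin R₁))
    (Q : Matrix (Fin R₁) (Fin D) ℝ) (K V : Matrix (Fin R₂) (Fin D) ℝ) :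
    attention (permRows π Q) K V = permRows π (attention Q K V) := by
  ext i j
  simp [attention, rowSoftmax, permRows, Matrix.mul_apply]

lemma attention_permRows_right {R₁ R₂ D : ℕ} (π : Equiv.Perm (Fin R₂))
    (Q : Matrix (Fin R₁) (Fin D) ℝ) (K V : Matrix (Fin R₂) (Fin D) ℝ) :
    attention Q (permRows π K) (permRows π V) = attention Q K V := by
  ext i j
  simp only [attention, rowSoftmax, permRows, Matrix.mul_apply, Matrix.of_apply,
    Matrix.smul_apply, Matrix.transpose_apply, smul_eq_mul]
  have hden : (∑ k, Real.exp ((Real.sqrt D)⁻¹ * ∑ l, Q i l * K (π k) l))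
      = ∑ k, Real.exp ((Real.sqrt D)⁻¹ * ∑ l, Q i l * K k l) :=
    Equiv.sum_comp π (fun k => Real.exp ((Real.sqrt D)⁻¹ * ∑ l, Q i l * K k l))
  rw [hden]
  exact Fintype.sum_equiv π _ _ (fun k => rfl)

theorem csa_mivpg_block_perm {M R D : ℕ} (hD : 0 < D)
    (B : Matrix (Fin M) (Fin D) ℝ) (q : Matrix (Fin R) (Fin D) ℝ)
    (π : Equiv.Perm (Fin M)) :
    csaUpdate q (permRows π B) = permRows π (csaUpdate q B) ∧
      queryUpdate q (permRows π B) = queryUpdate q B := by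
  have h1 : csaUpdate q (permRows π B) = permRows π (csaUpdate q B) :=
    attention_permRows_left π B q q
  refine ⟨h1, ?_⟩
  unfold queryUpdate
  rw [h1, attention_permRows_right]
end

section
/- Low-rank projected self-attention is permutation equivariant in the instances: fix a learnable matrix L ∈ ℝ^{M'×D}. For every B ∈ ℝ^{M×D}, define L'(B) = Attention(L, B, B) and F(B) = Attention(B, L'(B), L'(B)). Then for every permutation π of {1,…,M}, L'(π·B) = L'(B) and F(π·B) = π·F(B). -/
open Matrix BigOperators

/-- Low-rank aggregation: L' = Attention(L, B, B). -/
noncomputable def lowRankAgg {M M' D : ℕ} (L : Matrix (Fin M') (Fin D) ℝ)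
    (B : Matrix (Fin M) (Fin D) ℝ) : Matrix (Fin M') (Fin D) ℝ :=
  attention L B B

/-- Reintegration: F(B) = Attention(B, L'(B), L'(B)). -/
noncomputable def lowRankSelfAttn {M M' D : ℕ} (L : Matrix (Fin M') (Fin D) ℝ)
    (B : Matrix (Fin M) (Fin D) ℝ) : Matrix (Fin M) (Fin D) ℝ :=
  attention B (lowRankAgg L B) (lowRankAgg L B)


lemma attn_permKV {R₁ R₂ D : ℕ} (Q : Matrix (Fin R₁) (Fin D) ℝ)
    (K V : Matrix (Fin R₂) (Fin D) ℝ) (π : Equiv.Perm (Fin R₂)) :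
    attention Q (permRows π K) (permRows π V) = attention Q K V := by
  ext i j
  simp only [attention, rowSoftmax, permRows, Matrix.mul_apply, Matrix.transpose_apply,
    Matrix.smul_apply, Matrix.of_apply, smul_eq_mul]
  rw [← Equiv.sum_comp π (fun k => Real.exp ((Real.sqrt D)⁻¹ * ∑ d, Q i d * K k d) /
      (∑ k', Real.exp ((Real.sqrt D)⁻¹ * ∑ d, Q i d * K k' d)) * V k j)]
  congr 1
  ext k
  congr 2
  exact Equiv.sum_comp π (fun k' => Real.exp ((Real.sqrt D)⁻¹ * ∑ d, Q i d * K k' d))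

lemma attn_permQ {R₁ R₂ D : ℕ} (Q : Matrix (Fin R₁) (Fin D) ℝ)
    (K V : Matrix (Fin R₂) (Fin D) ℝ) (π : Equiv.Perm (Fin R₁)) :
    attention (permRows π Q) K V = permRows π (attention Q K V) := by
  ext i j
  simp [attention, rowSoftmax, permRows, Matrix.mul_apply, Matrix.transpose_apply,
    Matrix.smul_apply]

theorem lowRank_selfAttention_perm {M M' D : ℕ} (hD : 0 < D)
    (L : Matrix (Fin M') (Fin D) ℝ) (B : Matrix (Fin M) (Fin D) ℝ)
    (π : Equiv.Perm (Fin M)) :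
    lowRankAgg L (permRows π B) = lowRankAgg L B ∧
      lowRankSelfAttn L (permRows π B) = permRows π (lowRankSelfAttn L B) := by
  have h1 : lowRankAgg L (permRows π B) = lowRankAgg L B := attn_permKV L B B π
  refine ⟨h1, ?_⟩
  unfold lowRankSelfAttn
  rw [h1, attn_permQ]
end
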